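/- In the constructed EEF-EXISTENCE-ADDITIVE instance I', let s be an X_∀-assignment and let a be an X_∀-allocation corresponding to s. If the 3CNF formula C is satisfiable on s, then there exists an admissible allocation a' that Pareto-dominates a. -/
import Mathlib


/-! Construction of the EEF-EXISTENCE-ADDITIVE instance `I'` from a ∀∃3CNF instance.
Universal variables are `Fin p`, existential variables are `Fin q`, and the 3CNF
formula consists of clauses `φ 0, …, φ (k-1)`, each a finite set of literals. -/

/-- A variable: universal (`Sum.inl`) or existential (`Sum.inr`). -/
abbrev VarE (p q : ℕ) := Fin p ⊕ Fin q

/-- A literal: a variable with a polarity (`true` = positive, `false` = negative). -/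
abbrev LitE (p q : ℕ) := VarE p q × Bool

/-- A universal literal, i.e. a literal of a universal variable. -/
abbrev ULitE (p : ℕ) := Fin p × Bool

/-- The literal corresponding to a universal literal. -/
def uLit {p q : ℕ} (l : ULitE p) : LitE p q := (Sum.inl l.1, l.2)

/-- A pair of a clause and a literal occurring in it. -/
abbrev LitOccE (p q k : ℕ) (φ : Fin k → Finset (LitE p q)) :=
  Σ i : Fin k, {l : LitE p q // l ∈ φ i}

/-- A pair of a clause and a universal literal occurring in it. -/
abbrev ULitOccE (p q k : ℕ) (φ : Fin k → Finset (LitE p q)) :=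
  Σ i : Fin k, {l : LitE p q // l ∈ φ i ∧ l.1.isLeft = true}

/-- The agents of `I'`: `a_set(l)` for every literal `l`; `a^h_set(l)` for every
universal literal `l`; `a_c` for every clause `c`; `a^ep_{c,l}` for every clause `c`
and universal literal `l ∈ c`; and the agents `a_un`, `a^ep_un`, `a_sat`. -/
inductive AgentE (p q k : ℕ) (φ : Fin k → Finset (LitE p q)) where
  | aset (l : LitE p q)
  | ah (l : ULitE p)
  | ac (i : Fin k)
  | aep (e : ULitOccE p q k φ)
  | aun
  | aepun
  | asat
deriving DecidableEq, Fintype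

/-- The resources of `I'`: for each universal variable `x`, `o_x`, `o^comp_x` and the
two helper resources `o^h_set(x)`, `o^h_set(¬x)`; for each existential variable `y`,
`o_y`; for each clause `c`, `o_c` and `o^comp_c`; for each clause `c` and literal
`l ∈ c`, `o_{c,l}`; for each clause `c` and universal literal `l ∈ c`, `o^ep_{c,l}`;
and the resources `o_sat`, `o_envy1`, `o_envy2`. -/
inductive ResE (p q k : ℕ) (φ : Fin k → Finset (LitE p q)) where
  | ovar (x : Fin p)
  | ocomp (x : Fin p)
  | oh (l : ULitE p)
  | oevar (y : Fin q)
  | ocl (i : Fin k)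
  | occomp (i : Fin k)
  | olit (e : LitOccE p q k φ)
  | oep (e : ULitOccE p q k φ)
  | osat
  | oenvy1
  | oenvy2
deriving DecidableEq, Fintype

/-- `|C_l|`: the number of clauses containing the literal `l`, as a real number. -/
noncomputable def occE (p q k : ℕ) (φ : Fin k → Finset (LitE p q)) (l : LitE p q) : ℝ :=
  ((Finset.univ.filter fun i => l ∈ φ i).card : ℝ)

/-- The utility coefficients of `I'`, presented as pairs `(c, μ)` standing for the
coefficient `c + μ * M`, where `M` is the large constant.  A coefficient is a
"non-`M` coefficient" exactly when `μ = 0`. -/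
noncomputable def coeffAuxE (p q k : ℕ) (φ : Fin k → Finset (LitE p q)) :
    AgentE p q k φ → ResE p q k φ → ℝ × ℝ
  -- agents a_set(l)
  | .aset l, .ovar x => (if l.1 = Sum.inl x then 1 else 0, 0)
  | .aset l, .ocomp x => (if l.1 = Sum.inl x then 1 else 0, 0)
  | .aset l, .oh hl => (if l.1 = Sum.inl hl.1 then 1 else 0, 0)
  | .aset l, .oevar y => (if l.1 = Sum.inr y then occE p q k φ l else 0, 0)
  | .aset l, .olit ⟨_, l'⟩ =>
      (if (l' : LitE p q) = l ∧ l.1.isRight = true then 1 else 0, 0)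
  -- agents a^h_set(l)
  | .ah hl, .oh hl' => (if hl' = hl then occE p q k φ (uLit hl) else 0, 0)
  | .ah hl, .olit ⟨_, l'⟩ => (if (l' : LitE p q) = uLit hl then 1 else 0, 0)
  -- agents a_c
  | .ac i, .ocl i' => (0, if i' = i then 1 else 0)
  | .ac i, .occomp i' => (if i' = i then -1 else 0, if i' = i then 1 else 0)
  | .ac i, .olit ⟨i', _⟩ => (if i' = i then 1 else 0, 0)
  -- agents a^ep_{c,l}
  | .aep ⟨i, l⟩, .ocl i' => (0, if i' = i then 1 else 0)
  | .aep ⟨i, l⟩, .olit ⟨i', l'⟩ =>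
      (if i' = i ∧ (l' : LitE p q) = (l : LitE p q) then 1 else 0, 0)
  | .aep ⟨i, l⟩, .oep ⟨i', l'⟩ =>
      (0, if i' = i ∧ (l' : LitE p q) = (l : LitE p q) then 1 else 0)
  -- agent a_un
  | .aun, .ocomp _ => (1, 0)
  | .aun, .oevar _ => (1, 0)
  | .aun, .occomp _ => (1, 0)
  | .aun, .osat => ((q : ℝ) + (p : ℝ) + (k : ℝ) + 1, 0)
  | .aun, .oenvy1 => (2 * ((q : ℝ) + (p : ℝ) + (k : ℝ) + 1), 0)
  | .aun, .oenvy2 =>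
      (2 * ((q : ℝ) + (p : ℝ) + (k : ℝ) + 1) + ((q : ℝ) + (p : ℝ) + (k : ℝ)), 0)
  -- agent a^ep_un
  | .aepun, .oenvy2 => (0, 1)
  -- agent a_sat
  | .asat, .ocl _ => (1, 0)
  | .asat, .osat => ((k : ℝ), 0)
  | .asat, .oenvy1 => (1 / 2, 0)
  | _, _ => (0, 0)

/-- The utility coefficients of `I'` for a given value of the large constant `M`. -/
noncomputable def coeffE (p q k : ℕ) (φ : Fin k → Finset (LitE p q)) (M : ℝ)
    (A : AgentE p q k φ) (o : ResE p q k φ) : ℝ :=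
  (coeffAuxE p q k φ A o).1 + (coeffAuxE p q k φ A o).2 * M

/-- The sum of all non-`M` coefficients of `I'` (those whose `M`-multiplier is `0`). -/
noncomputable def nonMSumE (p q k : ℕ) (φ : Fin k → Finset (LitE p q)) : ℝ :=
  ∑ A : AgentE p q k φ, ∑ o : ResE p q k φ,
    if (coeffAuxE p q k φ A o).2 = 0 then (coeffAuxE p q k φ A o).1 else 0

/-- The utility that agent `i` assigns to the bundle held by agent `j` under an
allocation (an allocation maps each resource to at most one agent, hence is
automatically admissible). -/
noncomputable def utilE (p q k : ℕ) (φ : Fin k → Finset (LitE p q)) (M : ℝ)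
    (al : ResE p q k φ → Option (AgentE p q k φ)) (i j : AgentE p q k φ) : ℝ :=
  ∑ o : ResE p q k φ, if al o = some j then coeffE p q k φ M i o else 0

/-- Envy-freeness: every agent values its own bundle at least as much as the bundle of
any other agent. -/
def EnvyFreeE (p q k : ℕ) (φ : Fin k → Finset (LitE p q)) (M : ℝ)
    (al : ResE p q k φ → Option (AgentE p q k φ)) : Prop :=
  ∀ i j : AgentE p q k φ, utilE p q k φ M al i j ≤ utilE p q k φ M al i i

/-- `a'` Pareto-dominates `a`: no agent's utility decreases, some agent's utility
strictly increases. -/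
def DominatesE (p q k : ℕ) (φ : Fin k → Finset (LitE p q)) (M : ℝ)
    (a' a : ResE p q k φ → Option (AgentE p q k φ)) : Prop :=
  (∀ A, utilE p q k φ M a A A ≤ utilE p q k φ M a' A A) ∧
  ∃ A, utilE p q k φ M a A A < utilE p q k φ M a' A A

/-- Pareto optimality (efficiency): no admissible allocation Pareto-dominates `a`. -/
def ParetoOptE (p q k : ℕ) (φ : Fin k → Finset (LitE p q)) (M : ℝ)
    (a : ResE p q k φ → Option (AgentE p q k φ)) : Prop :=
  ¬ ∃ a' : ResE p q k φ → Option (AgentE p q k φ), DominatesE p q k φ M a' a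

/-- `C` is satisfiable on the `X_∀`-assignment `s` if some assignment `t` of the
existential variables, together with `s`, makes every clause true. -/
def SatOnE (p q k : ℕ) (φ : Fin k → Finset (LitE p q)) (s : Fin p → Bool) : Prop :=
  ∃ t : Fin q → Bool, ∀ i : Fin k, ∃ l ∈ φ i, Sum.elim s t l.1 = l.2

/-- `al` is an `X_∀`-allocation corresponding to the `X_∀`-assignment `s`. -/
def IsXAllocE (p q k : ℕ) (φ : Fin k → Finset (LitE p q)) (s : Fin p → Bool)
    (al : ResE p q k φ → Option (AgentE p q k φ)) : Prop :=
  -- each o_c goes to a_c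
  (∀ i : Fin k, al (.ocl i) = some (.ac i)) ∧
  -- each existential literal resource o_{c,l} goes to a_set(l)
  (∀ i : Fin k, ∀ l : {l : LitE p q // l ∈ φ i}, (l : LitE p q).1.isRight = true →
      al (.olit ⟨i, l⟩) = some (.aset l)) ∧
  -- for each universal variable x, o_x goes to one of a_set(x), a_set(¬x), and the two
  -- helper resources are placed according to the truth value of x under s
  (∀ x : Fin p, ∃ b : Bool,
      al (.ovar x) = some (.aset (Sum.inl x, b)) ∧
      (s x = true →
        al (.oh (x, true)) = some (.aset (Sum.inl x, !b)) ∧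
        al (.oh (x, false)) = some (.ah (x, !b))) ∧
      (s x = false →
        al (.oh (x, true)) = some (.ah (x, !b)) ∧
        al (.oh (x, false)) = some (.aset (Sum.inl x, !b)))) ∧
  -- each o^ep_{c,l} goes to a^ep_{c,l}
  (∀ e : ULitOccE p q k φ, al (.oep e) = some (.aep e)) ∧
  -- a_un receives all existential variable resources, all clause compensation
  -- resources, all universal variable compensation resources, and o_envy1
  (∀ y : Fin q, al (.oevar y) = some .aun) ∧
  (∀ i : Fin k, al (.occomp i) = some .aun) ∧
  (∀ x : Fin p, al (.ocomp x) = some .aun) ∧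
  al .oenvy1 = some .aun ∧
  -- o_envy2 goes to a^ep_un and o_sat goes to a_sat
  al .oenvy2 = some .aepun ∧
  al .osat = some .asat ∧
  -- each universal literal resource o_{c,l} goes to a^h_set(l) if l is true under s,
  -- and to either a^ep_{c,l} or a^h_set(l) if l is false under s
  (∀ e : ULitOccE p q k φ, ∀ x : Fin p, ∀ b : Bool,
      (e.2 : LitE p q) = (Sum.inl x, b) →
      ((s x = b → al (.olit ⟨e.1, ⟨e.2.1, e.2.2.1⟩⟩) = some (.ah (x, b))) ∧
       (s x ≠ b →
         (al (.olit ⟨e.1, ⟨e.2.1, e.2.2.1⟩⟩) = some (.ah (x, b)) ∨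
          al (.olit ⟨e.1, ⟨e.2.1, e.2.2.1⟩⟩) = some (.aep e)))))

/-- `al` is an `X_∀`-allocation: it corresponds to some `X_∀`-assignment. -/
def IsXAllocSomeE (p q k : ℕ) (φ : Fin k → Finset (LitE p q))
    (al : ResE p q k φ → Option (AgentE p q k φ)) : Prop :=
  ∃ s : Fin p → Bool, IsXAllocE p q k φ s al

open Finset

section Aux

variable {p q k : ℕ} {φ : Fin k → Finset (LitE p q)}

/-- Index type used to decompose sums over `ResE`. -/
abbrev ResIdx (p q k : ℕ) (φ : Fin k → Finset (LitE p q)) :=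
  Fin p ⊕ Fin p ⊕ ULitE p ⊕ Fin q ⊕ Fin k ⊕ Fin k ⊕ LitOccE p q k φ ⊕
    ULitOccE p q k φ ⊕ (Unit ⊕ Unit ⊕ Unit)

def resEquiv (p q k : ℕ) (φ : Fin k → Finset (LitE p q)) :
    ResIdx p q k φ ≃ ResE p q k φ where
  toFun := fun t => match t with
    | .inl x => .ovar x
    | .inr (.inl x) => .ocomp x
    | .inr (.inr (.inl l)) => .oh l
    | .inr (.inr (.inr (.inl y))) => .oevar y
    | .inr (.inr (.inr (.inr (.inl i)))) => .ocl i
    | .inr (.inr (.inr (.inr (.inr (.inl i))))) => .occomp i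
    | .inr (.inr (.inr (.inr (.inr (.inr (.inl e)))))) => .olit e
    | .inr (.inr (.inr (.inr (.inr (.inr (.inr (.inl e))))))) => .oep e
    | .inr (.inr (.inr (.inr (.inr (.inr (.inr (.inr (.inl _)))))))) => .osat
    | .inr (.inr (.inr (.inr (.inr (.inr (.inr (.inr (.inr (.inl _))))))))) => .oenvy1
    | .inr (.inr (.inr (.inr (.inr (.inr (.inr (.inr (.inr (.inr _))))))))) => .oenvy2
  invFun := fun o => match o with
    | .ovar x => .inl x
    | .ocomp x => .inr (.inl x)
    | .oh l => .inr (.inr (.inl l))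
    | .oevar y => .inr (.inr (.inr (.inl y)))
    | .ocl i => .inr (.inr (.inr (.inr (.inl i))))
    | .occomp i => .inr (.inr (.inr (.inr (.inr (.inl i)))))
    | .olit e => .inr (.inr (.inr (.inr (.inr (.inr (.inl e))))))
    | .oep e => .inr (.inr (.inr (.inr (.inr (.inr (.inr (.inl e)))))))
    | .osat => .inr (.inr (.inr (.inr (.inr (.inr (.inr (.inr (.inl ()))))))))
    | .oenvy1 => .inr (.inr (.inr (.inr (.inr (.inr (.inr (.inr (.inr (.inl ())))))))))
    | .oenvy2 => .inr (.inr (.inr (.inr (.inr (.inr (.inr (.inr (.inr (.inr ())))))))))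
  left_inv := by
    rintro (x | x | l | y | i | i | e | e | (⟨⟩ | ⟨⟩ | ⟨⟩)) <;> rfl
  right_inv := by
    rintro (x | x | l | y | i | i | e | e) <;> rfl

lemma sum_resE (f : ResE p q k φ → ℝ) :
    ∑ o, f o =
      (∑ x, f (.ovar x)) + (∑ x, f (.ocomp x)) + (∑ l : ULitE p, f (.oh l)) +
      (∑ y, f (.oevar y)) + (∑ i, f (.ocl i)) + (∑ i, f (.occomp i)) +
      (∑ e : LitOccE p q k φ, f (.olit e)) + (∑ e : ULitOccE p q k φ, f (.oep e)) +
      f .osat + f .oenvy1 + f .oenvy2 := by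
  rw [← Equiv.sum_comp (resEquiv p q k φ) f]
  simp only [Fintype.sum_sum_type, resEquiv, Equiv.coe_fn_mk, Fintype.univ_unit,
    Finset.sum_singleton]
  ring

end Aux
open Finset

section Helpers

variable {p q k : ℕ} {φ : Fin k → Finset (LitE p q)}

lemma occE_eq_sum (l : LitE p q) :
    occE p q k φ l = ∑ i, (if l ∈ φ i then (1 : ℝ) else 0) := by
  rw [occE, Finset.card_filter]
  push_cast
  rfl

lemma sum_subtype_ite {α : Type*} [DecidableEq α] (s : Finset α) (l : α) :
    ∑ l' : {x // x ∈ s}, (if (l' : α) = l then (1 : ℝ) else 0) =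
      if l ∈ s then 1 else 0 := by
  rw [Finset.univ_eq_attach, Finset.sum_attach s (fun x => if x = l then (1:ℝ) else 0),
    Finset.sum_ite_eq' s l (fun _ => (1:ℝ))]

/-- The dominating allocation. -/
def altAlloc (p q k : ℕ) (φ : Fin k → Finset (LitE p q)) (s : Fin p → Bool)
    (t : Fin q → Bool) (L : Fin k → LitE p q) (b : Fin p → Bool)
    (al : ResE p q k φ → Option (AgentE p q k φ)) :
    ResE p q k φ → Option (AgentE p q k φ) := fun o =>
  match o with
  | .ovar x => al (.ovar x)
  | .ocomp x => some (.aset (Sum.inl x, !(b x)))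
  | .oh hl => if hl.2 = s hl.1 then some (.ah hl) else al (.oh hl)
  | .oevar y => some (.aset (Sum.inr y, t y))
  | .ocl _ => some .asat
  | .occomp i => some (.ac i)
  | .olit e => if (e.2 : LitE p q) = L e.1 then some (.ac e.1) else al (.olit e)
  | .oep e => al (.oep e)
  | .osat => some .aun
  | .oenvy1 => al .oenvy1
  | .oenvy2 => al .oenvy2

/-- The difference in the utility contributed by resource `o` between two
allocations. -/
noncomputable def Dfun (p q k : ℕ) (φ : Fin k → Finset (LitE p q)) (M : ℝ)
    (al al' : ResE p q k φ → Option (AgentE p q k φ)) (A : AgentE p q k φ)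
    (o : ResE p q k φ) : ℝ :=
  (if al' o = some A then coeffE p q k φ M A o else 0) -
    (if al o = some A then coeffE p q k φ M A o else 0)

variable {M : ℝ} {al al' : ResE p q k φ → Option (AgentE p q k φ)}
  {A : AgentE p q k φ} {o : ResE p q k φ}

lemma util_sub (A : AgentE p q k φ) :
    utilE p q k φ M al' A A - utilE p q k φ M al A A =
      ∑ o, Dfun p q k φ M al al' A o := by
  rw [utilE, utilE, ← Finset.sum_sub_distrib]; rfl

lemma Dfun_same (h : al' o = al o) : Dfun p q k φ M al al' A o = 0 := by
  rw [Dfun, h, sub_self]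

lemma Dfun_zero (h : coeffE p q k φ M A o = 0) : Dfun p q k φ M al al' A o = 0 := by
  rw [Dfun, h]; simp

lemma Dfun_ge (c₀ : ℝ) (h0 : 0 ≤ coeffE p q k φ M A o)
    (h1 : coeffE p q k φ M A o ≤ c₀) : -c₀ ≤ Dfun p q k φ M al al' A o := by
  rw [Dfun]; split_ifs <;> linarith

lemma Dfun_eval {B B' : AgentE p q k φ} (hB : al o = some B) (hB' : al' o = some B') :
    Dfun p q k φ M al al' A o =
      (if B' = A then coeffE p q k φ M A o else 0) -
        (if B = A then coeffE p q k φ M A o else 0) := by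
  rw [Dfun, hB, hB']
  simp

lemma sum_litOcc_bound (l : LitE p q) (g : LitOccE p q k φ → ℝ)
    (hg : ∀ (i : Fin k) (l' : {l0 : LitE p q // l0 ∈ φ i}),
      -(if (l' : LitE p q) = l then (1:ℝ) else 0) ≤ g ⟨i, l'⟩) :
    -(occE p q k φ l) ≤ ∑ e : LitOccE p q k φ, g e := by
  rw [occE_eq_sum, ← Finset.univ_sigma_univ, Finset.sum_sigma, ← Finset.sum_neg_distrib]
  refine Finset.sum_le_sum fun i _ => ?_
  rw [← sum_subtype_ite (φ i) l, ← Finset.sum_neg_distrib]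
  exact Finset.sum_le_sum fun l' _ => hg i l'

end Helpers

section Chunks
variable {p q k : ℕ} {φ : Fin k → Finset (LitE p q)} {M : ℝ}
  {s : Fin p → Bool} {t : Fin q → Bool} {L : Fin k → LitE p q} {b : Fin p → Bool}
  {al al' : ResE p q k φ → Option (AgentE p q k φ)}
lemma chunk_aun
    (F5 : ∀ y, al (.oevar y) = some .aun)
    (F6 : ∀ i, al (.occomp i) = some .aun)
    (F7 : ∀ x, al (.ocomp x) = some .aun)
    (F10 : al .osat = some .asat)
    (E1 : ∀ x, al' (.ovar x) = al (.ovar x))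
    (E2 : ∀ x, al' (.ocomp x) = some (.aset (Sum.inl x, !(b x))))
    (E4 : ∀ y, al' (.oevar y) = some (.aset (Sum.inr y, t y)))
    (E6 : ∀ i, al' (.occomp i) = some (.ac i))
    (E8 : ∀ e, al' (.oep e) = al (.oep e))
    (E9 : al' .osat = some .aun)
    (E10 : al' .oenvy1 = al .oenvy1)
    (E11 : al' .oenvy2 = al .oenvy2) :
    ∑ o, Dfun p q k φ M al al' .aun o = 1 := by
  rw [sum_resE]
  have s1 : ∑ x, Dfun p q k φ M al al' .aun (.ovar x) = 0 :=
    Finset.sum_eq_zero fun x _ => Dfun_same (E1 x)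
  have s2 : ∑ x, Dfun p q k φ M al al' .aun (.ocomp x) = -(p : ℝ) := by
    have hv : ∀ x : Fin p, Dfun p q k φ M al al' .aun (.ocomp x) = -1 := by
      intro x
      rw [Dfun_eval (F7 x) (E2 x),
        show coeffE p q k φ M .aun (.ocomp x) = 1 from by
          rw [coeffE, show coeffAuxE p q k φ .aun (.ocomp x) = (1, 0) from rfl]; ring]
      simp
    rw [Finset.sum_congr rfl fun x _ => hv x]
    simp [Finset.sum_const]
  have s3 : ∑ hl : ULitE p, Dfun p q k φ M al al' .aun (.oh hl) = 0 :=
    Finset.sum_eq_zero fun hl _ => Dfun_zero (by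
      rw [coeffE, show coeffAuxE p q k φ .aun (.oh hl) = (0, 0) from rfl]; ring)
  have s4 : ∑ y, Dfun p q k φ M al al' .aun (.oevar y) = -(q : ℝ) := by
    have hv : ∀ y : Fin q, Dfun p q k φ M al al' .aun (.oevar y) = -1 := by
      intro y
      rw [Dfun_eval (F5 y) (E4 y),
        show coeffE p q k φ M .aun (.oevar y) = 1 from by
          rw [coeffE, show coeffAuxE p q k φ .aun (.oevar y) = (1, 0) from rfl]; ring]
      simp
    rw [Finset.sum_congr rfl fun y _ => hv y]
    simp [Finset.sum_const]
  have s5 : ∑ i, Dfun p q k φ M al al' .aun (.ocl i) = 0 :=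
    Finset.sum_eq_zero fun i _ => Dfun_zero (by
      rw [coeffE, show coeffAuxE p q k φ .aun (.ocl i) = (0, 0) from rfl]; ring)
  have s6 : ∑ i, Dfun p q k φ M al al' .aun (.occomp i) = -(k : ℝ) := by
    have hv : ∀ i : Fin k, Dfun p q k φ M al al' .aun (.occomp i) = -1 := by
      intro i
      rw [Dfun_eval (F6 i) (E6 i),
        show coeffE p q k φ M .aun (.occomp i) = 1 from by
          rw [coeffE, show coeffAuxE p q k φ .aun (.occomp i) = (1, 0) from rfl]; ring]
      simp
    rw [Finset.sum_congr rfl fun i _ => hv i]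
    simp [Finset.sum_const]
  have s7 : ∑ e : LitOccE p q k φ, Dfun p q k φ M al al' .aun (.olit e) = 0 :=
    Finset.sum_eq_zero fun e _ => by
      obtain ⟨i, l'⟩ := e
      exact Dfun_zero (by
        rw [coeffE, show coeffAuxE p q k φ .aun (.olit ⟨i, l'⟩) = (0, 0) from rfl]; ring)
  have s8 : ∑ e : ULitOccE p q k φ, Dfun p q k φ M al al' .aun (.oep e) = 0 :=
    Finset.sum_eq_zero fun e _ => Dfun_same (E8 e)
  have s9 : Dfun p q k φ M al al' .aun .osat = (q : ℝ) + (p : ℝ) + (k : ℝ) + 1 := by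
    rw [Dfun_eval F10 E9,
      show coeffE p q k φ M .aun .osat = (q : ℝ) + (p : ℝ) + (k : ℝ) + 1 from by
        rw [coeffE,
          show coeffAuxE p q k φ .aun .osat = ((q : ℝ) + (p : ℝ) + (k : ℝ) + 1, 0) from rfl]
        ring]
    simp
  have s10 : Dfun p q k φ M al al' .aun .oenvy1 = 0 := Dfun_same E10
  have s11 : Dfun p q k φ M al al' .aun .oenvy2 = 0 := Dfun_same E11
  rw [s1, s2, s3, s4, s5, s6, s7, s8, s9, s10, s11]
  ring

lemma chunk_asat
    (F1 : ∀ i, al (.ocl i) = some (.ac i))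
    (F5 : ∀ y, al (.oevar y) = some .aun)
    (F6 : ∀ i, al (.occomp i) = some .aun)
    (F7 : ∀ x, al (.ocomp x) = some .aun)
    (F10 : al .osat = some .asat)
    (E1 : ∀ x, al' (.ovar x) = al (.ovar x))
    (E2 : ∀ x, al' (.ocomp x) = some (.aset (Sum.inl x, !(b x))))
    (E4 : ∀ y, al' (.oevar y) = some (.aset (Sum.inr y, t y)))
    (E5 : ∀ i, al' (.ocl i) = some .asat)
    (E6 : ∀ i, al' (.occomp i) = some (.ac i))
    (E8 : ∀ e, al' (.oep e) = al (.oep e))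
    (E9 : al' .osat = some .aun)
    (E10 : al' .oenvy1 = al .oenvy1)
    (E11 : al' .oenvy2 = al .oenvy2) :
    ∑ o, Dfun p q k φ M al al' .asat o = 0 := by
  rw [sum_resE]
  have s1 : ∑ x, Dfun p q k φ M al al' .asat (.ovar x) = 0 :=
    Finset.sum_eq_zero fun x _ => Dfun_same (E1 x)
  have s2 : ∑ x, Dfun p q k φ M al al' .asat (.ocomp x) = 0 :=
    Finset.sum_eq_zero fun x _ => by
      rw [Dfun_eval (F7 x) (E2 x)]; simp
  have s3 : ∑ hl : ULitE p, Dfun p q k φ M al al' .asat (.oh hl) = 0 :=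
    Finset.sum_eq_zero fun hl _ => Dfun_zero (by
      rw [coeffE, show coeffAuxE p q k φ .asat (.oh hl) = (0, 0) from rfl]; ring)
  have s4 : ∑ y, Dfun p q k φ M al al' .asat (.oevar y) = 0 :=
    Finset.sum_eq_zero fun y _ => by
      rw [Dfun_eval (F5 y) (E4 y)]; simp
  have s5 : ∑ i, Dfun p q k φ M al al' .asat (.ocl i) = (k : ℝ) := by
    have hv : ∀ i : Fin k, Dfun p q k φ M al al' .asat (.ocl i) = 1 := by
      intro i
      rw [Dfun_eval (F1 i) (E5 i),
        show coeffE p q k φ M .asat (.ocl i) = 1 from by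
          rw [coeffE, show coeffAuxE p q k φ .asat (.ocl i) = (1, 0) from rfl]; ring]
      simp
    rw [Finset.sum_congr rfl fun i _ => hv i]
    simp [Finset.sum_const]
  have s6 : ∑ i, Dfun p q k φ M al al' .asat (.occomp i) = 0 :=
    Finset.sum_eq_zero fun i _ => by
      rw [Dfun_eval (F6 i) (E6 i)]; simp
  have s7 : ∑ e : LitOccE p q k φ, Dfun p q k φ M al al' .asat (.olit e) = 0 :=
    Finset.sum_eq_zero fun e _ => by
      obtain ⟨i, l'⟩ := e
      exact Dfun_zero (by
        rw [coeffE, show coeffAuxE p q k φ .asat (.olit ⟨i, l'⟩) = (0, 0) from rfl]; ring)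
  have s8 : ∑ e : ULitOccE p q k φ, Dfun p q k φ M al al' .asat (.oep e) = 0 :=
    Finset.sum_eq_zero fun e _ => Dfun_same (E8 e)
  have s9 : Dfun p q k φ M al al' .asat .osat = -(k : ℝ) := by
    rw [Dfun_eval F10 E9,
      show coeffE p q k φ M .asat .osat = (k : ℝ) from by
        rw [coeffE, show coeffAuxE p q k φ .asat .osat = ((k : ℝ), 0) from rfl]; ring]
    simp
  have s10 : Dfun p q k φ M al al' .asat .oenvy1 = 0 := Dfun_same E10
  have s11 : Dfun p q k φ M al al' .asat .oenvy2 = 0 := Dfun_same E11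
  rw [s1, s2, s3, s4, s5, s6, s7, s8, s9, s10, s11]
  ring

lemma chunk_aepun
    (F1 : ∀ i, al (.ocl i) = some (.ac i))
    (F5 : ∀ y, al (.oevar y) = some .aun)
    (F6 : ∀ i, al (.occomp i) = some .aun)
    (F7 : ∀ x, al (.ocomp x) = some .aun)
    (F10 : al .osat = some .asat)
    (E1 : ∀ x, al' (.ovar x) = al (.ovar x))
    (E2 : ∀ x, al' (.ocomp x) = some (.aset (Sum.inl x, !(b x))))
    (E4 : ∀ y, al' (.oevar y) = some (.aset (Sum.inr y, t y)))
    (E5 : ∀ i, al' (.ocl i) = some .asat)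
    (E6 : ∀ i, al' (.occomp i) = some (.ac i))
    (E8 : ∀ e, al' (.oep e) = al (.oep e))
    (E9 : al' .osat = some .aun)
    (E10 : al' .oenvy1 = al .oenvy1)
    (E11 : al' .oenvy2 = al .oenvy2) :
    ∑ o, Dfun p q k φ M al al' .aepun o = 0 := by
  rw [sum_resE]
  have s1 : ∑ x, Dfun p q k φ M al al' .aepun (.ovar x) = 0 :=
    Finset.sum_eq_zero fun x _ => Dfun_same (E1 x)
  have s2 : ∑ x, Dfun p q k φ M al al' .aepun (.ocomp x) = 0 :=
    Finset.sum_eq_zero fun x _ => by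
      rw [Dfun_eval (F7 x) (E2 x)]; simp
  have s3 : ∑ hl : ULitE p, Dfun p q k φ M al al' .aepun (.oh hl) = 0 :=
    Finset.sum_eq_zero fun hl _ => Dfun_zero (by
      rw [coeffE, show coeffAuxE p q k φ .aepun (.oh hl) = (0, 0) from rfl]; ring)
  have s4 : ∑ y, Dfun p q k φ M al al' .aepun (.oevar y) = 0 :=
    Finset.sum_eq_zero fun y _ => by
      rw [Dfun_eval (F5 y) (E4 y)]; simp
  have s5 : ∑ i, Dfun p q k φ M al al' .aepun (.ocl i) = 0 :=
    Finset.sum_eq_zero fun i _ => by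
      rw [Dfun_eval (F1 i) (E5 i)]; simp
  have s6 : ∑ i, Dfun p q k φ M al al' .aepun (.occomp i) = 0 :=
    Finset.sum_eq_zero fun i _ => by
      rw [Dfun_eval (F6 i) (E6 i)]; simp
  have s7 : ∑ e : LitOccE p q k φ, Dfun p q k φ M al al' .aepun (.olit e) = 0 :=
    Finset.sum_eq_zero fun e _ => by
      obtain ⟨i, l'⟩ := e
      exact Dfun_zero (by
        rw [coeffE, show coeffAuxE p q k φ .aepun (.olit ⟨i, l'⟩) = (0, 0) from rfl]; ring)
  have s8 : ∑ e : ULitOccE p q k φ, Dfun p q k φ M al al' .aepun (.oep e) = 0 :=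
    Finset.sum_eq_zero fun e _ => Dfun_same (E8 e)
  have s9 : Dfun p q k φ M al al' .aepun .osat = 0 := by
    rw [Dfun_eval F10 E9]; simp
  have s10 : Dfun p q k φ M al al' .aepun .oenvy1 = 0 := Dfun_same E10
  have s11 : Dfun p q k φ M al al' .aepun .oenvy2 = 0 := Dfun_same E11
  rw [s1, s2, s3, s4, s5, s6, s7, s8, s9, s10, s11]
  ring
lemma chunk_ac (j : Fin k)
    (F1 : ∀ i, al (.ocl i) = some (.ac i))
    (F5 : ∀ y, al (.oevar y) = some .aun)
    (F6 : ∀ i, al (.occomp i) = some .aun)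
    (F7 : ∀ x, al (.ocomp x) = some .aun)
    (F10 : al .osat = some .asat)
    (FL : ∀ i, L i ∈ φ i)
    (Fne : ∀ (i : Fin k) (l' : {l0 : LitE p q // l0 ∈ φ i}) (j' : Fin k),
      al (.olit ⟨i, l'⟩) ≠ some (.ac j'))
    (E1 : ∀ x, al' (.ovar x) = al (.ovar x))
    (E2 : ∀ x, al' (.ocomp x) = some (.aset (Sum.inl x, !(b x))))
    (E4 : ∀ y, al' (.oevar y) = some (.aset (Sum.inr y, t y)))
    (E5 : ∀ i, al' (.ocl i) = some .asat)
    (E6 : ∀ i, al' (.occomp i) = some (.ac i))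
    (E7 : ∀ (i : Fin k) (l' : {l0 : LitE p q // l0 ∈ φ i}), al' (.olit ⟨i, l'⟩) =
      if (l' : LitE p q) = L i then some (.ac i) else al (.olit ⟨i, l'⟩))
    (E8 : ∀ e, al' (.oep e) = al (.oep e))
    (E9 : al' .osat = some .aun)
    (E10 : al' .oenvy1 = al .oenvy1)
    (E11 : al' .oenvy2 = al .oenvy2) :
    0 ≤ ∑ o, Dfun p q k φ M al al' (.ac j) o := by
  rw [sum_resE]
  have s1 : ∑ x, Dfun p q k φ M al al' (.ac j) (.ovar x) = 0 :=
    Finset.sum_eq_zero fun x _ => Dfun_same (E1 x)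
  have s2 : ∑ x, Dfun p q k φ M al al' (.ac j) (.ocomp x) = 0 :=
    Finset.sum_eq_zero fun x _ => by
      rw [Dfun_eval (F7 x) (E2 x)]; simp
  have s3 : ∑ hl : ULitE p, Dfun p q k φ M al al' (.ac j) (.oh hl) = 0 :=
    Finset.sum_eq_zero fun hl _ => Dfun_zero (by
      rw [coeffE, show coeffAuxE p q k φ (.ac j) (.oh hl) = (0, 0) from rfl]; ring)
  have s4 : ∑ y, Dfun p q k φ M al al' (.ac j) (.oevar y) = 0 :=
    Finset.sum_eq_zero fun y _ => by
      rw [Dfun_eval (F5 y) (E4 y)]; simp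
  have s5 : ∑ i, Dfun p q k φ M al al' (.ac j) (.ocl i) = -M := by
    have hv : ∀ i : Fin k, Dfun p q k φ M al al' (.ac j) (.ocl i) =
        if i = j then -M else 0 := by
      intro i
      rw [Dfun_eval (F1 i) (E5 i),
        show coeffE p q k φ M (.ac j) (.ocl i) = if i = j then M else 0 from by
          rw [coeffE, show coeffAuxE p q k φ (.ac j) (.ocl i) =
            (0, if i = j then 1 else 0) from rfl]
          split_ifs <;> ring]
      rw [if_neg (show (AgentE.asat : AgentE p q k φ) ≠ .ac j from by simp), zero_sub]
      simp only [Option.some.injEq, AgentE.ac.injEq]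
      split_ifs <;> ring
    rw [Finset.sum_congr rfl fun i _ => hv i,
      Finset.sum_ite_eq' Finset.univ j (fun _ => -M)]
    simp
  have s6 : ∑ i, Dfun p q k φ M al al' (.ac j) (.occomp i) = M - 1 := by
    have hv : ∀ i : Fin k, Dfun p q k φ M al al' (.ac j) (.occomp i) =
        if i = j then M - 1 else 0 := by
      intro i
      rw [Dfun_eval (F6 i) (E6 i),
        show coeffE p q k φ M (.ac j) (.occomp i) = if i = j then M - 1 else 0 from by
          rw [coeffE, show coeffAuxE p q k φ (.ac j) (.occomp i) =
            (if i = j then -1 else 0, if i = j then 1 else 0) from rfl]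
          split_ifs <;> ring]
      rw [if_neg (show (AgentE.aun : AgentE p q k φ) ≠ .ac j from by simp), sub_zero]
      simp only [Option.some.injEq, AgentE.ac.injEq]
      split_ifs <;> ring
    rw [Finset.sum_congr rfl fun i _ => hv i,
      Finset.sum_ite_eq' Finset.univ j (fun _ => M - 1)]
    simp
  have s7 : 1 ≤ ∑ e : LitOccE p q k φ, Dfun p q k φ M al al' (.ac j) (.olit e) := by
    have hcf : ∀ (i : Fin k) (l' : {l0 : LitE p q // l0 ∈ φ i}),
        coeffE p q k φ M (.ac j) (.olit ⟨i, l'⟩) = if i = j then 1 else 0 := by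
      intro i l'
      rw [coeffE, show coeffAuxE p q k φ (.ac j) (.olit ⟨i, l'⟩) =
        (if i = j then 1 else 0, 0) from rfl]
      ring
    have hnn : ∀ e : LitOccE p q k φ, 0 ≤ Dfun p q k φ M al al' (.ac j) (.olit e) := by
      rintro ⟨i, l'⟩
      rw [Dfun, if_neg (Fne i l' j), sub_zero, hcf i l']
      split_ifs <;> norm_num
    have hone : Dfun p q k φ M al al' (.ac j) (.olit ⟨j, ⟨L j, FL j⟩⟩) = 1 := by
      have hB' : al' (.olit ⟨j, ⟨L j, FL j⟩⟩) = some (.ac j) := by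
        rw [E7 j ⟨L j, FL j⟩]; exact if_pos rfl
      rw [Dfun, hB', if_neg (Fne j ⟨L j, FL j⟩ j), sub_zero, if_pos rfl,
        hcf j ⟨L j, FL j⟩, if_pos rfl]
    calc (1:ℝ) = Dfun p q k φ M al al' (.ac j) (.olit ⟨j, ⟨L j, FL j⟩⟩) := hone.symm
      _ ≤ ∑ e : LitOccE p q k φ, Dfun p q k φ M al al' (.ac j) (.olit e) :=
        Finset.single_le_sum (fun e _ => hnn e) (Finset.mem_univ _)
  have s8 : ∑ e : ULitOccE p q k φ, Dfun p q k φ M al al' (.ac j) (.oep e) = 0 :=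
    Finset.sum_eq_zero fun e _ => Dfun_same (E8 e)
  have s9 : Dfun p q k φ M al al' (.ac j) .osat = 0 := by
    rw [Dfun_eval F10 E9]; simp
  have s10 : Dfun p q k φ M al al' (.ac j) .oenvy1 = 0 := Dfun_same E10
  have s11 : Dfun p q k φ M al al' (.ac j) .oenvy2 = 0 := Dfun_same E11
  linarith
lemma chunk_aep (j : Fin k) (lj : {l : LitE p q // l ∈ φ j ∧ l.1.isLeft = true})
    (F1 : ∀ i, al (.ocl i) = some (.ac i))
    (F5 : ∀ y, al (.oevar y) = some .aun)
    (F6 : ∀ i, al (.occomp i) = some .aun)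
    (F7 : ∀ x, al (.ocomp x) = some .aun)
    (F10 : al .osat = some .asat)
    (Foh : ∀ x, al (.oh (x, s x)) = some (.aset (Sum.inl x, !(b x))))
    (FLt : ∀ i, Sum.elim s t (L i).1 = (L i).2)
    (Ftrue : ∀ (i : Fin k) (l' : {l0 : LitE p q // l0 ∈ φ i}) (x : Fin p) (bb : Bool),
      (l' : LitE p q) = (Sum.inl x, bb) → s x = bb →
      al (.olit ⟨i, l'⟩) = some (.ah (x, bb)))
    (E1 : ∀ x, al' (.ovar x) = al (.ovar x))
    (E2 : ∀ x, al' (.ocomp x) = some (.aset (Sum.inl x, !(b x))))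
    (E3 : ∀ hl : ULitE p, al' (.oh hl) =
      if hl.2 = s hl.1 then some (.ah hl) else al (.oh hl))
    (E4 : ∀ y, al' (.oevar y) = some (.aset (Sum.inr y, t y)))
    (E5 : ∀ i, al' (.ocl i) = some .asat)
    (E6 : ∀ i, al' (.occomp i) = some (.ac i))
    (E7 : ∀ (i : Fin k) (l' : {l0 : LitE p q // l0 ∈ φ i}), al' (.olit ⟨i, l'⟩) =
      if (l' : LitE p q) = L i then some (.ac i) else al (.olit ⟨i, l'⟩))
    (E8 : ∀ e, al' (.oep e) = al (.oep e))
    (E9 : al' .osat = some .aun)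
    (E10 : al' .oenvy1 = al .oenvy1)
    (E11 : al' .oenvy2 = al .oenvy2) :
    ∑ o, Dfun p q k φ M al al' (.aep ⟨j, lj⟩) o = 0 := by
  rw [sum_resE]
  have s1 : ∑ x, Dfun p q k φ M al al' (.aep ⟨j, lj⟩) (.ovar x) = 0 :=
    Finset.sum_eq_zero fun x _ => Dfun_same (E1 x)
  have s2 : ∑ x, Dfun p q k φ M al al' (.aep ⟨j, lj⟩) (.ocomp x) = 0 :=
    Finset.sum_eq_zero fun x _ => by
      rw [Dfun_eval (F7 x) (E2 x)]; simp
  have s3 : ∑ hl : ULitE p, Dfun p q k φ M al al' (.aep ⟨j, lj⟩) (.oh hl) = 0 :=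
    Finset.sum_eq_zero fun hl _ => by
      obtain ⟨x', c'⟩ := hl
      by_cases hcs : c' = s x'
      · subst hcs
        have hB' : al' (.oh (x', s x')) = some (.ah (x', s x')) := by
          rw [E3 (x', s x')]; exact if_pos rfl
        rw [Dfun_eval (Foh x') hB']; simp
      · exact Dfun_same (by rw [E3 (x', c')]; exact if_neg hcs)
  have s4 : ∑ y, Dfun p q k φ M al al' (.aep ⟨j, lj⟩) (.oevar y) = 0 :=
    Finset.sum_eq_zero fun y _ => by
      rw [Dfun_eval (F5 y) (E4 y)]; simp
  have s5 : ∑ i, Dfun p q k φ M al al' (.aep ⟨j, lj⟩) (.ocl i) = 0 :=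
    Finset.sum_eq_zero fun i _ => by
      rw [Dfun_eval (F1 i) (E5 i)]; simp
  have s6 : ∑ i, Dfun p q k φ M al al' (.aep ⟨j, lj⟩) (.occomp i) = 0 :=
    Finset.sum_eq_zero fun i _ => by
      rw [Dfun_eval (F6 i) (E6 i)]; simp
  have s7 : ∑ e : LitOccE p q k φ, Dfun p q k φ M al al' (.aep ⟨j, lj⟩) (.olit e) = 0 :=
    Finset.sum_eq_zero fun e _ => by
      obtain ⟨i, l'⟩ := e
      by_cases hch : (l' : LitE p q) = L i
      · have hB' : al' (.olit ⟨i, l'⟩) = some (.ac i) := by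
          rw [E7 i l']; exact if_pos hch
        rw [Dfun, hB',
          if_neg (show ¬ (some (AgentE.ac i) = some (AgentE.aep (φ := φ) ⟨j, lj⟩))
            from by simp), zero_sub]
        by_cases hcond : i = j ∧ (l' : LitE p q) = (lj : LitE p q)
        · obtain ⟨x, hx⟩ : ∃ x, (l' : LitE p q).1 = Sum.inl x := by
            have hL : (l' : LitE p q).1.isLeft = true := by
              rw [hcond.2]; exact lj.2.2
            exact Sum.isLeft_iff.mp hL
          have hpair : (l' : LitE p q) = (Sum.inl x, (l' : LitE p q).2) := by
            rw [← hx]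
          have hsx : s x = (l' : LitE p q).2 := by
            have h0 := FLt i
            rw [← hch, hx] at h0
            simpa using h0
          rw [if_neg (by
            rw [Ftrue i l' x ((l' : LitE p q).2) hpair hsx]; simp), neg_zero]
        · rw [show coeffE p q k φ M (.aep ⟨j, lj⟩) (.olit ⟨i, l'⟩) = 0 from by
            rw [coeffE, show coeffAuxE p q k φ (.aep ⟨j, lj⟩) (.olit ⟨i, l'⟩) =
              (if i = j ∧ (l' : LitE p q) = (lj : LitE p q) then 1 else 0, 0) from rfl,
              if_neg hcond]; ring]
          simp
      · exact Dfun_same (by rw [E7 i l']; exact if_neg hch)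
  have s8 : ∑ e : ULitOccE p q k φ, Dfun p q k φ M al al' (.aep ⟨j, lj⟩) (.oep e) = 0 :=
    Finset.sum_eq_zero fun e _ => Dfun_same (E8 e)
  have s9 : Dfun p q k φ M al al' (.aep ⟨j, lj⟩) .osat = 0 := by
    rw [Dfun_eval F10 E9]; simp
  have s10 : Dfun p q k φ M al al' (.aep ⟨j, lj⟩) .oenvy1 = 0 := Dfun_same E10
  have s11 : Dfun p q k φ M al al' (.aep ⟨j, lj⟩) .oenvy2 = 0 := Dfun_same E11
  rw [s1, s2, s3, s4, s5, s6, s7, s8, s9, s10, s11]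
  ring
lemma chunk_ah (x : Fin p) (c : Bool)
    (F1 : ∀ i, al (.ocl i) = some (.ac i))
    (F5 : ∀ y, al (.oevar y) = some .aun)
    (F6 : ∀ i, al (.occomp i) = some .aun)
    (F7 : ∀ x, al (.ocomp x) = some .aun)
    (F10 : al .osat = some .asat)
    (Foh : ∀ x, al (.oh (x, s x)) = some (.aset (Sum.inl x, !(b x))))
    (FLt : ∀ i, Sum.elim s t (L i).1 = (L i).2)
    (E1 : ∀ x, al' (.ovar x) = al (.ovar x))
    (E2 : ∀ x, al' (.ocomp x) = some (.aset (Sum.inl x, !(b x))))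
    (E3 : ∀ hl : ULitE p, al' (.oh hl) =
      if hl.2 = s hl.1 then some (.ah hl) else al (.oh hl))
    (E4 : ∀ y, al' (.oevar y) = some (.aset (Sum.inr y, t y)))
    (E5 : ∀ i, al' (.ocl i) = some .asat)
    (E6 : ∀ i, al' (.occomp i) = some (.ac i))
    (E7 : ∀ (i : Fin k) (l' : {l0 : LitE p q // l0 ∈ φ i}), al' (.olit ⟨i, l'⟩) =
      if (l' : LitE p q) = L i then some (.ac i) else al (.olit ⟨i, l'⟩))
    (E8 : ∀ e, al' (.oep e) = al (.oep e))
    (E9 : al' .osat = some .aun)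
    (E10 : al' .oenvy1 = al .oenvy1)
    (E11 : al' .oenvy2 = al .oenvy2) :
    0 ≤ ∑ o, Dfun p q k φ M al al' (.ah (x, c)) o := by
  rw [sum_resE]
  have s1 : ∑ x', Dfun p q k φ M al al' (.ah (x, c)) (.ovar x') = 0 :=
    Finset.sum_eq_zero fun x' _ => Dfun_same (E1 x')
  have s2 : ∑ x', Dfun p q k φ M al al' (.ah (x, c)) (.ocomp x') = 0 :=
    Finset.sum_eq_zero fun x' _ => by
      rw [Dfun_eval (F7 x') (E2 x')]; simp
  have s3 : ∑ hl : ULitE p, Dfun p q k φ M al al' (.ah (x, c)) (.oh hl) =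
      if c = s x then occE p q k φ (Sum.inl x, c) else 0 := by
    have hv : ∀ hl : ULitE p, Dfun p q k φ M al al' (.ah (x, c)) (.oh hl) =
        if hl = (x, c) then (if c = s x then occE p q k φ (Sum.inl x, c) else 0)
          else 0 := by
      rintro ⟨x', c'⟩
      by_cases hcs : c' = s x'
      · subst hcs
        have hB' : al' (.oh (x', s x')) = some (.ah (x', s x')) := by
          rw [E3 (x', s x')]; exact if_pos rfl
        rw [Dfun_eval (Foh x') hB',
          show coeffE p q k φ M (.ah (x, c)) (.oh (x', s x')) =
            if ((x', s x') : ULitE p) = (x, c) then occE p q k φ (Sum.inl x, c) else 0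
            from by
            rw [coeffE, show coeffAuxE p q k φ (.ah (x, c)) (.oh (x', s x')) =
              (if ((x', s x') : ULitE p) = (x, c)
                then occE p q k φ (Sum.inl x, c) else 0, 0) from rfl]
            ring,
          if_neg (show ¬ (AgentE.aset (φ := φ) (Sum.inl x', !(b x')) = .ah (x, c))
            from by simp), sub_zero]
        simp only [AgentE.ah.injEq]
        by_cases hp : ((x', s x') : ULitE p) = (x, c)
        · have hx' : x' = x := congrArg Prod.fst hp
          subst hx'
          have hc' : s x' = c := congrArg Prod.snd hp
          simp only [if_pos hp, if_pos hc'.symm]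
        · simp only [if_neg hp]
      · have h0 : al' (.oh (x', c')) = al (.oh (x', c')) := by
          rw [E3 (x', c')]; exact if_neg hcs
        rw [Dfun_same h0]
        by_cases hp : ((x', c') : ULitE p) = (x, c)
        · have hx' : x' = x := congrArg Prod.fst hp
          have hc' : c' = c := congrArg Prod.snd hp
          rw [if_pos hp, if_neg (show ¬ (c = s x) from fun hcsx =>
            hcs (by rw [hc', hcsx, hx']))]
        · rw [if_neg hp]
    rw [Finset.sum_congr rfl fun hl _ => hv hl,
      Finset.sum_ite_eq' Finset.univ ((x, c) : ULitE p)
        (fun _ => if c = s x then occE p q k φ (Sum.inl x, c) else 0)]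
    simp
  have s4 : ∑ y, Dfun p q k φ M al al' (.ah (x, c)) (.oevar y) = 0 :=
    Finset.sum_eq_zero fun y _ => by
      rw [Dfun_eval (F5 y) (E4 y)]; simp
  have s5 : ∑ i, Dfun p q k φ M al al' (.ah (x, c)) (.ocl i) = 0 :=
    Finset.sum_eq_zero fun i _ => by
      rw [Dfun_eval (F1 i) (E5 i)]; simp
  have s6 : ∑ i, Dfun p q k φ M al al' (.ah (x, c)) (.occomp i) = 0 :=
    Finset.sum_eq_zero fun i _ => by
      rw [Dfun_eval (F6 i) (E6 i)]; simp
  have cf : ∀ (i : Fin k) (l' : {l0 : LitE p q // l0 ∈ φ i}),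
      coeffE p q k φ M (.ah (x, c)) (.olit ⟨i, l'⟩) =
        if (l' : LitE p q) = (Sum.inl x, c) then 1 else 0 := by
    intro i l'
    rw [coeffE, show coeffAuxE p q k φ (.ah (x, c)) (.olit ⟨i, l'⟩) =
      (if (l' : LitE p q) = (Sum.inl x, c) then 1 else 0, 0) from rfl]
    ring
  have s7 : -(if c = s x then occE p q k φ (Sum.inl x, c) else 0) ≤
      ∑ e : LitOccE p q k φ, Dfun p q k φ M al al' (.ah (x, c)) (.olit e) := by
    by_cases hcs : c = s x
    · rw [if_pos hcs]
      refine sum_litOcc_bound (Sum.inl x, c) _ fun i l' => ?_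
      exact Dfun_ge _ (by rw [cf i l']; split_ifs <;> norm_num) (le_of_eq (cf i l'))
    · rw [if_neg hcs, neg_zero]
      refine le_of_eq (Finset.sum_eq_zero fun e _ => ?_).symm
      obtain ⟨i, l'⟩ := e
      by_cases hle : (l' : LitE p q) = (Sum.inl x, c)
      · refine Dfun_same ?_
        rw [E7 i l']
        refine if_neg fun hch => hcs ?_
        have h0 := FLt i
        rw [← hch, hle] at h0
        simpa using h0.symm
      · exact Dfun_zero (by rw [cf i l', if_neg hle])
  have s8 : ∑ e : ULitOccE p q k φ, Dfun p q k φ M al al' (.ah (x, c)) (.oep e) = 0 :=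
    Finset.sum_eq_zero fun e _ => Dfun_same (E8 e)
  have s9 : Dfun p q k φ M al al' (.ah (x, c)) .osat = 0 := by
    rw [Dfun_eval F10 E9]; simp
  have s10 : Dfun p q k φ M al al' (.ah (x, c)) .oenvy1 = 0 := Dfun_same E10
  have s11 : Dfun p q k φ M al al' (.ah (x, c)) .oenvy2 = 0 := Dfun_same E11
  linarith
lemma chunk_aset_inl (x : Fin p) (c : Bool)
    (F1 : ∀ i, al (.ocl i) = some (.ac i))
    (F5 : ∀ y, al (.oevar y) = some .aun)
    (F6 : ∀ i, al (.occomp i) = some .aun)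
    (F7 : ∀ x, al (.ocomp x) = some .aun)
    (F10 : al .osat = some .asat)
    (Foh : ∀ x, al (.oh (x, s x)) = some (.aset (Sum.inl x, !(b x))))
    (E1 : ∀ x, al' (.ovar x) = al (.ovar x))
    (E2 : ∀ x, al' (.ocomp x) = some (.aset (Sum.inl x, !(b x))))
    (E3 : ∀ hl : ULitE p, al' (.oh hl) =
      if hl.2 = s hl.1 then some (.ah hl) else al (.oh hl))
    (E4 : ∀ y, al' (.oevar y) = some (.aset (Sum.inr y, t y)))
    (E5 : ∀ i, al' (.ocl i) = some .asat)
    (E6 : ∀ i, al' (.occomp i) = some (.ac i))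
    (E7 : ∀ (i : Fin k) (l' : {l0 : LitE p q // l0 ∈ φ i}), al' (.olit ⟨i, l'⟩) =
      if (l' : LitE p q) = L i then some (.ac i) else al (.olit ⟨i, l'⟩))
    (E8 : ∀ e, al' (.oep e) = al (.oep e))
    (E9 : al' .osat = some .aun)
    (E10 : al' .oenvy1 = al .oenvy1)
    (E11 : al' .oenvy2 = al .oenvy2) :
    0 ≤ ∑ o, Dfun p q k φ M al al' (.aset (Sum.inl x, c)) o := by
  rw [sum_resE]
  have s1 : ∑ x', Dfun p q k φ M al al' (.aset (Sum.inl x, c)) (.ovar x') = 0 :=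
    Finset.sum_eq_zero fun x' _ => Dfun_same (E1 x')
  have s2 : ∑ x', Dfun p q k φ M al al' (.aset (Sum.inl x, c)) (.ocomp x') =
      if c = !(b x) then 1 else 0 := by
    have hv : ∀ x' : Fin p, Dfun p q k φ M al al' (.aset (Sum.inl x, c)) (.ocomp x') =
        if x' = x then (if c = !(b x) then (1:ℝ) else 0) else 0 := by
      intro x'
      rw [Dfun_eval (F7 x') (E2 x'),
        show coeffE p q k φ M (.aset (Sum.inl x, c)) (.ocomp x') =
          if (Sum.inl x : VarE p q) = Sum.inl x' then 1 else 0 from by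
          rw [coeffE, show coeffAuxE p q k φ (.aset (Sum.inl x, c)) (.ocomp x') =
            (if (Sum.inl x : VarE p q) = Sum.inl x' then 1 else 0, 0) from rfl]
          ring,
        if_neg (show ¬ (AgentE.aun (φ := φ) = .aset (Sum.inl x, c)) from by simp),
        sub_zero]
      by_cases h1 : x' = x
      · subst h1
        by_cases h2 : c = !(b x')
        · simp [h2]
        · simp [h2, Ne.symm h2]
      · simp [h1, Ne.symm h1]
    rw [Finset.sum_congr rfl fun x' _ => hv x',
      Finset.sum_ite_eq' Finset.univ x (fun _ => if c = !(b x) then (1:ℝ) else 0)]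
    simp
  have s3 : ∑ hl : ULitE p, Dfun p q k φ M al al' (.aset (Sum.inl x, c)) (.oh hl) =
      if c = !(b x) then -1 else 0 := by
    have hv : ∀ hl : ULitE p, Dfun p q k φ M al al' (.aset (Sum.inl x, c)) (.oh hl) =
        if hl = (x, s x) then (if c = !(b x) then (-1:ℝ) else 0) else 0 := by
      rintro ⟨x', c'⟩
      by_cases hcs : c' = s x'
      · subst hcs
        have hB' : al' (.oh (x', s x')) = some (.ah (x', s x')) := by
          rw [E3 (x', s x')]; exact if_pos rfl
        rw [Dfun_eval (Foh x') hB',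
          show coeffE p q k φ M (.aset (Sum.inl x, c)) (.oh (x', s x')) =
            if (Sum.inl x : VarE p q) = Sum.inl x' then 1 else 0 from by
            rw [coeffE, show coeffAuxE p q k φ (.aset (Sum.inl x, c)) (.oh (x', s x')) =
              (if (Sum.inl x : VarE p q) = Sum.inl x' then 1 else 0, 0) from rfl]
            ring,
          if_neg (show ¬ (AgentE.ah (φ := φ) (x', s x') = .aset (Sum.inl x, c))
            from by simp), zero_sub]
        by_cases h1 : x' = x
        · subst h1
          by_cases h2 : c = !(b x')
          · simp [h2]
          · simp [h2, Ne.symm h2]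
        · simp [h1, Ne.symm h1]
      · have h0 : al' (.oh (x', c')) = al (.oh (x', c')) := by
          rw [E3 (x', c')]; exact if_neg hcs
        rw [Dfun_same h0, if_neg (show ¬ (((x', c') : ULitE p) = (x, s x)) from
          fun hp => hcs (by
            rw [show x' = x from congrArg Prod.fst hp,
              show c' = s x from congrArg Prod.snd hp]))]
    rw [Finset.sum_congr rfl fun hl _ => hv hl,
      Finset.sum_ite_eq' Finset.univ ((x, s x) : ULitE p)
        (fun _ => if c = !(b x) then (-1:ℝ) else 0)]
    simp
  have s4 : ∑ y, Dfun p q k φ M al al' (.aset (Sum.inl x, c)) (.oevar y) = 0 :=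
    Finset.sum_eq_zero fun y _ => by
      rw [Dfun_eval (F5 y) (E4 y)]; simp
  have s5 : ∑ i, Dfun p q k φ M al al' (.aset (Sum.inl x, c)) (.ocl i) = 0 :=
    Finset.sum_eq_zero fun i _ => by
      rw [Dfun_eval (F1 i) (E5 i)]; simp
  have s6 : ∑ i, Dfun p q k φ M al al' (.aset (Sum.inl x, c)) (.occomp i) = 0 :=
    Finset.sum_eq_zero fun i _ => by
      rw [Dfun_eval (F6 i) (E6 i)]; simp
  have s7 : ∑ e : LitOccE p q k φ,
      Dfun p q k φ M al al' (.aset (Sum.inl x, c)) (.olit e) = 0 :=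
    Finset.sum_eq_zero fun e _ => by
      obtain ⟨i, l'⟩ := e
      exact Dfun_zero (by
        rw [coeffE, show coeffAuxE p q k φ (.aset (Sum.inl x, c)) (.olit ⟨i, l'⟩) =
          (if (l' : LitE p q) = (Sum.inl x, c) ∧
            (Sum.inl x : VarE p q).isRight = true then 1 else 0, 0) from rfl,
          if_neg (fun hc => by simpa using hc.2)]
        ring)
  have s8 : ∑ e : ULitOccE p q k φ,
      Dfun p q k φ M al al' (.aset (Sum.inl x, c)) (.oep e) = 0 :=
    Finset.sum_eq_zero fun e _ => Dfun_same (E8 e)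
  have s9 : Dfun p q k φ M al al' (.aset (Sum.inl x, c)) .osat = 0 := by
    rw [Dfun_eval F10 E9]; simp
  have s10 : Dfun p q k φ M al al' (.aset (Sum.inl x, c)) .oenvy1 = 0 := Dfun_same E10
  have s11 : Dfun p q k φ M al al' (.aset (Sum.inl x, c)) .oenvy2 = 0 := Dfun_same E11
  have hz : (if c = !(b x) then (1:ℝ) else 0) + (if c = !(b x) then (-1:ℝ) else 0) = 0 := by
    split_ifs <;> ring
  linarith
lemma chunk_aset_inr (y : Fin q) (c : Bool)
    (F1 : ∀ i, al (.ocl i) = some (.ac i))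
    (F5 : ∀ y, al (.oevar y) = some .aun)
    (F6 : ∀ i, al (.occomp i) = some .aun)
    (F7 : ∀ x, al (.ocomp x) = some .aun)
    (F10 : al .osat = some .asat)
    (Foh : ∀ x, al (.oh (x, s x)) = some (.aset (Sum.inl x, !(b x))))
    (FLt : ∀ i, Sum.elim s t (L i).1 = (L i).2)
    (E1 : ∀ x, al' (.ovar x) = al (.ovar x))
    (E2 : ∀ x, al' (.ocomp x) = some (.aset (Sum.inl x, !(b x))))
    (E3 : ∀ hl : ULitE p, al' (.oh hl) =
      if hl.2 = s hl.1 then some (.ah hl) else al (.oh hl))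
    (E4 : ∀ y, al' (.oevar y) = some (.aset (Sum.inr y, t y)))
    (E5 : ∀ i, al' (.ocl i) = some .asat)
    (E6 : ∀ i, al' (.occomp i) = some (.ac i))
    (E7 : ∀ (i : Fin k) (l' : {l0 : LitE p q // l0 ∈ φ i}), al' (.olit ⟨i, l'⟩) =
      if (l' : LitE p q) = L i then some (.ac i) else al (.olit ⟨i, l'⟩))
    (E8 : ∀ e, al' (.oep e) = al (.oep e))
    (E9 : al' .osat = some .aun)
    (E10 : al' .oenvy1 = al .oenvy1)
    (E11 : al' .oenvy2 = al .oenvy2) :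
    0 ≤ ∑ o, Dfun p q k φ M al al' (.aset (Sum.inr y, c)) o := by
  rw [sum_resE]
  have s1 : ∑ x', Dfun p q k φ M al al' (.aset (Sum.inr y, c)) (.ovar x') = 0 :=
    Finset.sum_eq_zero fun x' _ => Dfun_same (E1 x')
  have s2 : ∑ x', Dfun p q k φ M al al' (.aset (Sum.inr y, c)) (.ocomp x') = 0 :=
    Finset.sum_eq_zero fun x' _ => by
      rw [Dfun_eval (F7 x') (E2 x')]; simp
  have s3 : ∑ hl : ULitE p, Dfun p q k φ M al al' (.aset (Sum.inr y, c)) (.oh hl) = 0 :=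
    Finset.sum_eq_zero fun hl _ => by
      obtain ⟨x', c'⟩ := hl
      by_cases hcs : c' = s x'
      · subst hcs
        have hB' : al' (.oh (x', s x')) = some (.ah (x', s x')) := by
          rw [E3 (x', s x')]; exact if_pos rfl
        rw [Dfun_eval (Foh x') hB']; simp
      · exact Dfun_same (by rw [E3 (x', c')]; exact if_neg hcs)
  have s4 : ∑ y', Dfun p q k φ M al al' (.aset (Sum.inr y, c)) (.oevar y') =
      if c = t y then occE p q k φ (Sum.inr y, c) else 0 := by
    have hv : ∀ y' : Fin q, Dfun p q k φ M al al' (.aset (Sum.inr y, c)) (.oevar y') =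
        if y' = y then (if c = t y then occE p q k φ (Sum.inr y, c) else 0) else 0 := by
      intro y'
      rw [Dfun_eval (F5 y') (E4 y'),
        show coeffE p q k φ M (.aset (Sum.inr y, c)) (.oevar y') =
          if (Sum.inr y : VarE p q) = Sum.inr y'
            then occE p q k φ (Sum.inr y, c) else 0 from by
          rw [coeffE, show coeffAuxE p q k φ (.aset (Sum.inr y, c)) (.oevar y') =
            (if (Sum.inr y : VarE p q) = Sum.inr y'
              then occE p q k φ (Sum.inr y, c) else 0, 0) from rfl]
          ring,
        if_neg (show ¬ (AgentE.aun (φ := φ) = .aset (Sum.inr y, c)) from by simp),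
        sub_zero]
      by_cases h1 : y' = y
      · subst h1
        by_cases h2 : c = t y'
        · simp [h2]
        · simp [h2, Ne.symm h2]
      · simp [h1, Ne.symm h1]
    rw [Finset.sum_congr rfl fun y' _ => hv y',
      Finset.sum_ite_eq' Finset.univ y
        (fun _ => if c = t y then occE p q k φ (Sum.inr y, c) else 0)]
    simp
  have s5 : ∑ i, Dfun p q k φ M al al' (.aset (Sum.inr y, c)) (.ocl i) = 0 :=
    Finset.sum_eq_zero fun i _ => by
      rw [Dfun_eval (F1 i) (E5 i)]; simp
  have s6 : ∑ i, Dfun p q k φ M al al' (.aset (Sum.inr y, c)) (.occomp i) = 0 :=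
    Finset.sum_eq_zero fun i _ => by
      rw [Dfun_eval (F6 i) (E6 i)]; simp
  have cf : ∀ (i : Fin k) (l' : {l0 : LitE p q // l0 ∈ φ i}),
      coeffE p q k φ M (.aset (Sum.inr y, c)) (.olit ⟨i, l'⟩) =
        if (l' : LitE p q) = (Sum.inr y, c) then 1 else 0 := by
    intro i l'
    rw [coeffE, show coeffAuxE p q k φ (.aset (Sum.inr y, c)) (.olit ⟨i, l'⟩) =
      (if (l' : LitE p q) = (Sum.inr y, c) ∧
        (Sum.inr y : VarE p q).isRight = true then 1 else 0, 0) from rfl]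
    have : ((l' : LitE p q) = (Sum.inr y, c) ∧
        (Sum.inr y : VarE p q).isRight = true) ↔ (l' : LitE p q) = (Sum.inr y, c) := by
      simp
    rw [if_congr this rfl rfl]
    ring
  have s7 : -(if c = t y then occE p q k φ (Sum.inr y, c) else 0) ≤
      ∑ e : LitOccE p q k φ, Dfun p q k φ M al al' (.aset (Sum.inr y, c)) (.olit e) := by
    by_cases hct : c = t y
    · rw [if_pos hct]
      refine sum_litOcc_bound (Sum.inr y, c) _ fun i l' => ?_
      exact Dfun_ge _ (by rw [cf i l']; split_ifs <;> norm_num) (le_of_eq (cf i l'))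
    · rw [if_neg hct, neg_zero]
      refine le_of_eq (Finset.sum_eq_zero fun e _ => ?_).symm
      obtain ⟨i, l'⟩ := e
      by_cases hle : (l' : LitE p q) = (Sum.inr y, c)
      · refine Dfun_same ?_
        rw [E7 i l']
        refine if_neg fun hch => hct ?_
        have h0 := FLt i
        rw [← hch, hle] at h0
        simpa using h0.symm
      · exact Dfun_zero (by rw [cf i l', if_neg hle])
  have s8 : ∑ e : ULitOccE p q k φ,
      Dfun p q k φ M al al' (.aset (Sum.inr y, c)) (.oep e) = 0 :=
    Finset.sum_eq_zero fun e _ => Dfun_same (E8 e)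
  have s9 : Dfun p q k φ M al al' (.aset (Sum.inr y, c)) .osat = 0 := by
    rw [Dfun_eval F10 E9]; simp
  have s10 : Dfun p q k φ M al al' (.aset (Sum.inr y, c)) .oenvy1 = 0 := Dfun_same E10
  have s11 : Dfun p q k φ M al al' (.aset (Sum.inr y, c)) .oenvy2 = 0 := Dfun_same E11
  linarith

end Chunks

/-- Lemma: in the constructed EEF-EXISTENCE-ADDITIVE instance `I'`, if the formula `C`
is satisfiable on the `X_∀`-assignment `s`, then any `X_∀`-allocation corresponding
to `s` is Pareto-dominated by some admissible allocation. -/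
theorem XAlloc_dominated_of_satOn (p q k : ℕ) (φ : Fin k → Finset (LitE p q))
    (hφ : ∀ i, (φ i).card ≤ 3)
    (hocc : ∀ (v : VarE p q) (b : Bool), ∃ i, ((v, b) ∈ φ i))
    (M : ℝ) (hM : nonMSumE p q k φ < M)
    (s : Fin p → Bool) (al : ResE p q k φ → Option (AgentE p q k φ))
    (hal : IsXAllocE p q k φ s al) (hsat : SatOnE p q k φ s) :
    ∃ al' : ResE p q k φ → Option (AgentE p q k φ), DominatesE p q k φ M al' al := by
  obtain ⟨t, ht⟩ := hsat
  choose L hLmem hLtrue using ht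
  obtain ⟨h1, h2, h3, h4, h5, h6, h7, h8, h9, h10, h11⟩ := hal
  choose b hb1 hb2 hb3 using h3
  have Foh : ∀ x, al (.oh (x, s x)) = some (.aset (Sum.inl x, !(b x))) := by
    intro x
    cases hsx : s x with
    | true => exact (hb2 x hsx).1
    | false => exact (hb3 x hsx).2
  have Fne : ∀ (i : Fin k) (l' : {l0 : LitE p q // l0 ∈ φ i}) (j' : Fin k),
      al (.olit ⟨i, l'⟩) ≠ some (.ac j') := by
    rintro i ⟨⟨v, bb⟩, hm⟩ j' hcon
    cases v with
    | inl x =>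
      have hh := h11 ⟨i, ⟨(Sum.inl x, bb), hm, rfl⟩⟩ x bb rfl
      by_cases hsx : s x = bb
      · have h' : al (.olit ⟨i, ⟨(Sum.inl x, bb), hm⟩⟩) = some (.ah (x, bb)) :=
          hh.1 hsx
        rw [h'] at hcon; simp at hcon
      · rcases hh.2 hsx with h' | h'
        · have h'' : al (.olit ⟨i, ⟨(Sum.inl x, bb), hm⟩⟩) = some (.ah (x, bb)) := h'
          rw [h''] at hcon; simp at hcon
        · have h'' : al (.olit ⟨i, ⟨(Sum.inl x, bb), hm⟩⟩) =
            some (.aep ⟨i, ⟨(Sum.inl x, bb), hm, rfl⟩⟩) := h'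
          rw [h''] at hcon; simp at hcon
    | inr yy =>
      have h' : al (.olit ⟨i, ⟨(Sum.inr yy, bb), hm⟩⟩) =
          some (.aset (Sum.inr yy, bb)) := h2 i ⟨(Sum.inr yy, bb), hm⟩ rfl
      rw [h'] at hcon; simp at hcon
  have Ftrue : ∀ (i : Fin k) (l' : {l0 : LitE p q // l0 ∈ φ i}) (x : Fin p) (bb : Bool),
      (l' : LitE p q) = (Sum.inl x, bb) → s x = bb →
      al (.olit ⟨i, l'⟩) = some (.ah (x, bb)) := by
    rintro i ⟨lv, hm⟩ x bb hv hsx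
    obtain rfl : lv = (Sum.inl x, bb) := hv
    exact (h11 ⟨i, ⟨(Sum.inl x, bb), hm, rfl⟩⟩ x bb rfl).1 hsx
  have E1 : ∀ x, altAlloc p q k φ s t L b al (.ovar x) = al (.ovar x) := fun _ => rfl
  have E2 : ∀ x, altAlloc p q k φ s t L b al (.ocomp x) =
      some (.aset (Sum.inl x, !(b x))) := fun _ => rfl
  have E3 : ∀ hl : ULitE p, altAlloc p q k φ s t L b al (.oh hl) =
      if hl.2 = s hl.1 then some (.ah hl) else al (.oh hl) := fun _ => rfl
  have E4 : ∀ y, altAlloc p q k φ s t L b al (.oevar y) =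
      some (.aset (Sum.inr y, t y)) := fun _ => rfl
  have E5 : ∀ i, altAlloc p q k φ s t L b al (.ocl i) = some .asat := fun _ => rfl
  have E6 : ∀ i, altAlloc p q k φ s t L b al (.occomp i) = some (.ac i) :=
    fun _ => rfl
  have E7 : ∀ (i : Fin k) (l' : {l0 : LitE p q // l0 ∈ φ i}),
      altAlloc p q k φ s t L b al (.olit ⟨i, l'⟩) =
        if (l' : LitE p q) = L i then some (.ac i) else al (.olit ⟨i, l'⟩) :=
    fun _ _ => rfl
  have E8 : ∀ e, altAlloc p q k φ s t L b al (.oep e) = al (.oep e) := fun _ => rfl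
  have E9 : altAlloc p q k φ s t L b al .osat = some .aun := rfl
  have E10 : altAlloc p q k φ s t L b al .oenvy1 = al .oenvy1 := rfl
  have E11 : altAlloc p q k φ s t L b al .oenvy2 = al .oenvy2 := rfl
  have keyun := chunk_aun (M := M) h5 h6 h7 h10 E1 E2 E4 E6 E8 E9 E10 E11
  have key : ∀ A, 0 ≤ ∑ o, Dfun p q k φ M al (altAlloc p q k φ s t L b al) A o := by
    intro A
    rcases A with ⟨v, c⟩ | ⟨x, c⟩ | j | ⟨j, lj⟩ | _ | _ | _
    · rcases v with x | y
      · exact chunk_aset_inl x c h1 h5 h6 h7 h10 Foh E1 E2 E3 E4 E5 E6 E7 E8 E9 E10 E11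
      · exact chunk_aset_inr y c h1 h5 h6 h7 h10 Foh hLtrue
          E1 E2 E3 E4 E5 E6 E7 E8 E9 E10 E11
    · exact chunk_ah x c h1 h5 h6 h7 h10 Foh hLtrue E1 E2 E3 E4 E5 E6 E7 E8 E9 E10 E11
    · exact chunk_ac j h1 h5 h6 h7 h10 hLmem Fne E1 E2 E4 E5 E6 E7 E8 E9 E10 E11
    · exact le_of_eq (chunk_aep j lj h1 h5 h6 h7 h10 Foh hLtrue Ftrue
        E1 E2 E3 E4 E5 E6 E7 E8 E9 E10 E11).symm
    · rw [keyun]; exact zero_le_one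
    · exact le_of_eq (chunk_aepun h1 h5 h6 h7 h10 E1 E2 E4 E5 E6 E8 E9 E10 E11).symm
    · exact le_of_eq (chunk_asat h1 h5 h6 h7 h10 E1 E2 E4 E5 E6 E8 E9 E10 E11).symm
  refine ⟨altAlloc p q k φ s t L b al, fun A => ?_, ⟨.aun, ?_⟩⟩
  · have hd := util_sub (M := M) (al := al) (al' := altAlloc p q k φ s t L b al) A
    linarith [key A]
  · have hd := util_sub (M := M) (al := al)
      (al' := altAlloc p q k φ s t L b al) (AgentE.aun (φ := φ))
    linarith [keyun]
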